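/- arXiv:2306.01963 — 2 statements merged into one kernel-verified Lean document; each statement's English description precedes it below -/
import Mathlib

section
/- Let J₀(x) := (1/(2π)) ∫₀^{2π} cos(x·sin t) dt. Then for every real x, (1/(2π)²) ∫₀^{2π} ∫₀^{2π} cos(x·sin θ·sin φ) dφ dθ = J₀(x/2)². Equivalently, if (θ, φ) is uniformly distributed on [0,2π]², then E[cos(x·sin θ·sin φ)] = J₀(x/2)². -/
/-!
Since `x sin θ sin φ = (x/2) cos (θ - φ) - (x/2) cos (θ + φ)` and the map
`(θ, φ) ↦ (θ - φ, θ + φ)` preserves the Haar measure of the torus `(ℝ/2πℤ)²` (it is two-to-one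
with Jacobian 2), the double integral equals that of `cos ((x/2) cos u - (x/2) cos v)`.
Expanding the cosine of the difference, the `sin · sin` term vanishes because
`t ↦ sin ((x/2) cos t)` changes sign under `t ↦ t + π`, and what is left is
`(∫ cos ((x/2) cos t) dt)²`; finally `cos` and `sin` have the same integrals over a period.
-/

open Real MeasureTheory intervalIntegral

/-- Bessel function of the first kind of order zero (integral representation). -/
noncomputable def J₀ (x : ℝ) : ℝ :=
  (1 / (2 * π)) * ∫ t in (0:ℝ)..(2 * π), Real.cos (x * Real.sin t)

variable {E : Type*} [NormedAddCommGroup E] [NormedSpace ℝ E] {T : ℝ}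

namespace Function.Periodic

variable {f : ℝ → E}

theorem intervalIntegral_comp_add_right_eq (hf : Periodic f T) (c : ℝ) :
    ∫ t in 0..T, f (t + c) = ∫ t in 0..T, f t := by
  simpa [integral_comp_add_right, add_comm] using hf.intervalIntegral_add_eq c 0

theorem intervalIntegral_comp_zmul_sub_eq (hf : Periodic f T)
    (hfi : ∀ t₁ t₂, IntervalIntegrable f volume t₁ t₂) {n : ℤ} (hn : n ≠ 0) (c : ℝ) :
    ∫ t in 0..T, f (n * t - c) = ∫ t in 0..T, f t := by
  have hn' : (n : ℝ) ≠ 0 := Int.cast_ne_zero.mpr hn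
  have hend : (n : ℝ) * T - c = -c + n • T := by rw [zsmul_eq_mul]; ring
  rw [integral_comp_mul_sub f hn', mul_zero, zero_sub, hend,
    hf.intervalIntegral_add_zsmul_eq n (-c) hfi, hf.intervalIntegral_add_eq (-c) 0, zero_add,
    ← Int.cast_smul_eq_zsmul ℝ, smul_smul, inv_mul_cancel₀ hn', one_smul]

end Function.Periodic

theorem intervalIntegral_intervalIntegral_comp_sub_add {K : ℝ → ℝ → E}
    (hK : Continuous K.uncurry) (hK₁ : ∀ v, Function.Periodic (K · v) T)
    (hK₂ : ∀ u, Function.Periodic (K u) T) :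
    ∫ θ in 0..T, ∫ φ in 0..T, K (θ - φ) (θ + φ) = ∫ u in 0..T, ∫ v in 0..T, K u v := by
  have hcont : Continuous (fun p : ℝ × ℝ => K p.2 (2 * p.1 - p.2)) :=
    hK.comp (f := fun p : ℝ × ℝ => (p.2, 2 * p.1 - p.2)) (by fun_prop)
  calc ∫ θ in 0..T, ∫ φ in 0..T, K (θ - φ) (θ + φ)
      = ∫ θ in 0..T, ∫ ψ in 0..T, K ψ (2 * θ - ψ) := by
        refine integral_congr fun θ _ => ?_
        have hper : Function.Periodic (fun ψ => K ψ (2 * θ - ψ)) T := fun ψ => by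
          simp only [sub_add_eq_sub_sub, (hK₂ _).sub_eq]
          exact hK₁ _ ψ
        have h := integral_comp_sub_left (fun ψ => K ψ (2 * θ - ψ)) θ (a := 0) (b := T)
        simp only [sub_zero, show ∀ φ, 2 * θ - (θ - φ) = θ + φ from fun φ => by ring] at h
        simpa [h] using hper.intervalIntegral_add_eq (θ - T) 0
    _ = ∫ ψ in 0..T, ∫ θ in 0..T, K ψ (2 * θ - ψ) :=
        intervalIntegral_intervalIntegral_swap <|
          (hcont.continuousOn.integrableOn_compact (isCompact_uIcc.prod isCompact_uIcc)).mono_set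
            (Set.prod_mono Set.uIoc_subset_uIcc Set.uIoc_subset_uIcc)
    _ = ∫ u in 0..T, ∫ v in 0..T, K u v :=
        integral_congr fun ψ _ => by
          simpa using (hK₂ ψ).intervalIntegral_comp_zmul_sub_eq
            (fun _ _ => (hK.comp (by fun_prop : Continuous fun v => (ψ, v))).intervalIntegrable _ _)
            (n := 2) two_ne_zero ψ

theorem integral_comp_cos_eq_integral_comp_sin (F : ℝ → E) :
    ∫ t in 0..2 * π, F (cos t) = ∫ t in 0..2 * π, F (sin t) := by
  simp_rw [← sin_add_pi_div_two]
  exact (sin_periodic.comp F).intervalIntegral_comp_add_right_eq (π / 2)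

theorem integral_comp_cos_eq_zero_of_odd {F : ℝ → E} (hF : ∀ y, F (-y) = -F y) :
    ∫ t in 0..2 * π, F (cos t) = 0 := by
  have h : ∫ t in 0..2 * π, F (cos t) = -∫ t in 0..2 * π, F (cos t) := by
    calc ∫ t in 0..2 * π, F (cos t) = ∫ t in 0..2 * π, F (cos (t + π)) :=
          ((cos_periodic.comp F).intervalIntegral_comp_add_right_eq π).symm
      _ = -∫ t in 0..2 * π, F (cos t) := by simp_rw [cos_add_pi, hF, intervalIntegral.integral_neg]
  rw [eq_neg_iff_add_eq_zero, ← two_smul ℝ, smul_eq_zero] at h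
  exact h.resolve_left two_ne_zero

theorem integral_cos_sub_mul_cos (a b : ℝ) :
    ∫ t in 0..2 * π, cos (b - a * cos t) = cos b * ∫ t in 0..2 * π, cos (a * cos t) := by
  have hsin : ∫ t in 0..2 * π, sin (a * cos t) = 0 :=
    integral_comp_cos_eq_zero_of_odd (F := fun y => sin (a * y)) fun y => by
      rw [mul_neg, sin_neg]
  simp_rw [cos_sub]
  rw [integral_add ((by fun_prop : Continuous _).intervalIntegrable _ _)
      ((by fun_prop : Continuous _).intervalIntegrable _ _),
    intervalIntegral.integral_const_mul, intervalIntegral.integral_const_mul, hsin, mul_zero,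
    add_zero]

theorem stmt_0 (x : ℝ) :
    (1 / (2 * π) ^ 2) *
      ∫ θ in (0:ℝ)..(2 * π), ∫ φ in (0:ℝ)..(2 * π),
        Real.cos (x * Real.sin θ * Real.sin φ)
    = (J₀ (x / 2)) ^ 2 := by
  have hprod : ∀ θ φ, x * sin θ * sin φ = x / 2 * cos (θ - φ) - x / 2 * cos (θ + φ) := by
    intro θ φ
    rw [cos_sub, cos_add]
    ring
  have hcos := integral_comp_cos_eq_integral_comp_sin fun y => cos (x / 2 * y)
  simp_rw [hprod]
  rw [intervalIntegral_intervalIntegral_comp_sub_add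
    (K := fun u v => cos (x / 2 * cos u - x / 2 * cos v)) (by fun_prop)
    (fun v u => by simp [cos_add_two_pi]) (fun u v => by simp [cos_add_two_pi])]
  simp_rw [integral_cos_sub_mul_cos, intervalIntegral.integral_mul_const]
  rw [hcos, J₀]
  field_simp
end

section
/- Let (θ₁, φ₁) and (θ₂, φ₂) be independent, each uniformly distributed on [0,2π]², and set h₁ := sin θ₁·sin φ₁, h₂ := sin θ₂·sin φ₂. Fix a real number a and a natural number n_R ≥ 1, and define F₁₂ := Σ_{s=1}^{n_R−1} (n_R − s)·cos(s·a·(h₁ − h₂)). Then E[F₁₂] = Σ_{s=1}^{n_R−1} (n_R − s)·J₀(s·a/2)⁴. -/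
open Real MeasureTheory Finset

/-- Expectation over two independent pairs of angles, each uniform on `[0, 2π]²`. -/
noncomputable def E4 (f : ℝ → ℝ → ℝ → ℝ → ℝ) : ℝ :=
  (1 / (2 * π) ^ 4) *
    ∫ θ₁ in (0:ℝ)..(2 * π), ∫ φ₁ in (0:ℝ)..(2 * π),
      ∫ θ₂ in (0:ℝ)..(2 * π), ∫ φ₂ in (0:ℝ)..(2 * π), f θ₁ φ₁ θ₂ φ₂

/-!
For fixed `(θ₁, φ₁)`, expand
`cos (c (h₁ - h₂)) = cos (c h₁) cos (c h₂) + sin (c h₁) sin (c h₂)`: the sine term averages to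
zero because `t ↦ 2π - t` flips the sign of `sin t`, so the inner average is `cos (c h₁)` times
the average of `cos (c h)`, and the outer average squares it. Averaging `cos (c sin θ sin φ)`
over `φ` gives `J₀ (c sin θ)`, and Neumann's formula `J₀ (z)² = (1/2π) ∫₀^{2π} J₀ (2z sin t) dt`
makes the remaining average over `θ` equal `J₀ (c/2)²`. Neumann's formula itself comes from
writing `J₀ (z)²` as a double average of `cos (z sin s - z sin t)` and substituting `t = s + u`:
as `z sin s - z sin (s + u) = -2z sin (u/2) cos (s + u/2)`, the average over `s` is
`J₀ (2z sin (u/2))`.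
-/

section Periodic

variable {g : ℝ → ℝ} {T : ℝ}

lemma Function.Periodic.intervalIntegral_comp_add_right_eq_s3 (hg : Function.Periodic g T) (r : ℝ) :
    ∫ t in (0:ℝ)..T, g (t + r) = ∫ t in (0:ℝ)..T, g t := by
  rw [intervalIntegral.integral_comp_add_right, zero_add, add_comm T r,
    hg.intervalIntegral_add_eq r 0, zero_add]

lemma Function.Periodic.intervalIntegral_comp_div_two (hg : Function.Periodic g T)
    (hc : Continuous g) :
    ∫ u in (0:ℝ)..2 * T, g (u / 2) = ∫ u in (0:ℝ)..2 * T, g u := by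
  have h := hg.intervalIntegral_add_zsmul_eq 2 0 fun _ _ => hc.intervalIntegrable _ _
  simp only [zero_add, two_zsmul, ← two_mul] at h
  rw [intervalIntegral.integral_comp_div _ two_ne_zero, h, zero_div,
    mul_div_cancel_left₀ _ two_ne_zero, smul_eq_mul]

end Periodic

section Fubini

variable {a b c d : ℝ}

lemma intervalIntegral_intervalIntegral_swap_of_continuous {F : ℝ → ℝ → ℝ}
    (hF : Continuous F.uncurry) :
    ∫ x in a..b, ∫ y in c..d, F x y = ∫ y in c..d, ∫ x in a..b, F x y :=
  intervalIntegral_intervalIntegral_swap <|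
    (hF.continuousOn.integrableOn_compact (isCompact_uIcc.prod isCompact_uIcc)).mono_set
      (Set.prod_mono Set.uIoc_subset_uIcc Set.uIoc_subset_uIcc)

lemma intervalIntegral_intervalIntegral_finsetSum {ι : Type*} (S : Finset ι)
    {F : ι → ℝ → ℝ → ℝ} (hF : ∀ i, Continuous (F i).uncurry) :
    ∫ x in a..b, ∫ y in c..d, ∑ i ∈ S, F i x y =
      ∑ i ∈ S, ∫ x in a..b, ∫ y in c..d, F i x y := by
  have hinner (x : ℝ) :
      ∫ y in c..d, ∑ i ∈ S, F i x y = ∑ i ∈ S, ∫ y in c..d, F i x y :=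
    intervalIntegral.integral_finsetSum fun i _ =>
      ((hF i).comp (Continuous.prodMk_right x)).intervalIntegrable _ _
  simp only [hinner]
  exact intervalIntegral.integral_finsetSum fun i _ =>
    (intervalIntegral.continuous_parametric_intervalIntegral_of_continuous' (hF i) c d
      ).intervalIntegrable _ _

lemma intervalIntegral_intervalIntegral_cos_sub {f g : ℝ → ℝ} (hf : Continuous f)
    (hg : Continuous g) :
    ∫ x in a..b, ∫ y in c..d, cos (f x - g y) =
      (∫ x in a..b, cos (f x)) * (∫ y in c..d, cos (g y)) +
        (∫ x in a..b, sin (f x)) * (∫ y in c..d, sin (g y)) := by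
  have hinner (x : ℝ) : ∫ y in c..d, cos (f x - g y) =
      cos (f x) * (∫ y in c..d, cos (g y)) + sin (f x) * (∫ y in c..d, sin (g y)) := by
    simp only [cos_sub]
    rw [intervalIntegral.integral_add ((by fun_prop : Continuous _).intervalIntegrable _ _)
      ((by fun_prop : Continuous _).intervalIntegrable _ _),
      intervalIntegral.integral_const_mul, intervalIntegral.integral_const_mul]
  simp only [hinner]
  rw [intervalIntegral.integral_add ((by fun_prop : Continuous _).intervalIntegrable _ _)
      ((by fun_prop : Continuous _).intervalIntegrable _ _),
    intervalIntegral.integral_mul_const, intervalIntegral.integral_mul_const]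

end Fubini

lemma integral_cos_mul_sin (x : ℝ) :
    ∫ t in (0:ℝ)..2 * π, cos (x * sin t) = 2 * π * J₀ x := by
  rw [J₀]
  field_simp

lemma integral_sin_mul_sin (x : ℝ) : ∫ t in (0:ℝ)..2 * π, sin (x * sin t) = 0 := by
  have h := intervalIntegral.integral_comp_sub_left (fun t => sin (x * sin t)) (2 * π)
    (a := 0) (b := 2 * π)
  simp only [sin_two_pi_sub, mul_neg, sin_neg, intervalIntegral.integral_neg, sub_zero,
    sub_self] at h
  linarith

lemma integral_cos_mul_cos (x : ℝ) :
    ∫ t in (0:ℝ)..2 * π, cos (x * cos t) = 2 * π * J₀ x := by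
  have hper : Function.Periodic (fun t => cos (x * sin t)) (2 * π) := fun t => by
    simp only [sin_add_two_pi]
  have h := hper.intervalIntegral_comp_add_right_eq_s3 (π / 2)
  simp only [sin_add_pi_div_two] at h
  rw [h, integral_cos_mul_sin]

lemma continuous_J₀ : Continuous J₀ :=
  continuous_const.mul
    (intervalIntegral.continuous_parametric_intervalIntegral_of_continuous' (by fun_prop) _ _)

lemma J₀_neg (x : ℝ) : J₀ (-x) = J₀ x := by
  simp only [J₀, neg_mul, cos_neg]

lemma integral_cos_sub_mul_sin_eq (z s : ℝ) :
    ∫ t in (0:ℝ)..2 * π, cos (z * sin s - z * sin t) =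
      ∫ u in (0:ℝ)..2 * π, cos (2 * z * sin (u / 2) * cos (s + u / 2)) := by
  have hper : Function.Periodic (fun t => cos (z * sin s - z * sin t)) (2 * π) := fun t => by
    simp only [sin_add_two_pi]
  rw [← hper.intervalIntegral_comp_add_right_eq_s3 s]
  congr 1 with u
  rw [← mul_sub, sin_sub_sin, show (s - (u + s)) / 2 = -(u / 2) by ring,
    show (s + (u + s)) / 2 = s + u / 2 by ring, sin_neg, ← cos_neg]
  ring_nf

/-- Neumann's addition formula for `J₀`. -/
lemma integral_J₀_two_mul_sin (z : ℝ) :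
    ∫ t in (0:ℝ)..2 * π, J₀ (2 * z * sin t) = 2 * π * J₀ z ^ 2 := by
  have hper : Function.Periodic (fun t => J₀ (2 * z * sin t)) π := fun t => by
    simp only [sin_add_pi, mul_neg, J₀_neg]
  have key :
      2 * π * (2 * π * J₀ z ^ 2) = 2 * π * ∫ t in (0:ℝ)..2 * π, J₀ (2 * z * sin t) :=
    calc 2 * π * (2 * π * J₀ z ^ 2)
        = ∫ s in (0:ℝ)..2 * π, ∫ t in (0:ℝ)..2 * π, cos (z * sin s - z * sin t) := by
          rw [intervalIntegral_intervalIntegral_cos_sub (by fun_prop) (by fun_prop),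
            integral_cos_mul_sin, integral_sin_mul_sin]
          ring
      _ = ∫ s in (0:ℝ)..2 * π, ∫ u in (0:ℝ)..2 * π,
            cos (2 * z * sin (u / 2) * cos (s + u / 2)) := by
          simp only [integral_cos_sub_mul_sin_eq]
      _ = ∫ u in (0:ℝ)..2 * π, ∫ s in (0:ℝ)..2 * π,
            cos (2 * z * sin (u / 2) * cos (s + u / 2)) :=
          intervalIntegral_intervalIntegral_swap_of_continuous (by fun_prop)
      _ = ∫ u in (0:ℝ)..2 * π, 2 * π * J₀ (2 * z * sin (u / 2)) := by
          congr 1 with u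
          have hper' : Function.Periodic (fun s => cos (2 * z * sin (u / 2) * cos s)) (2 * π) :=
            fun s => by simp only [cos_add_two_pi]
          rw [hper'.intervalIntegral_comp_add_right_eq_s3, integral_cos_mul_cos]
      _ = 2 * π * ∫ t in (0:ℝ)..2 * π, J₀ (2 * z * sin t) := by
          rw [intervalIntegral.integral_const_mul,
            hper.intervalIntegral_comp_div_two (continuous_J₀.comp (by fun_prop))]
  exact (mul_left_cancel₀ (by positivity) key).symm

lemma integral_cos_mul_sub_mul_sin (c H y : ℝ) :
    ∫ φ in (0:ℝ)..2 * π, cos (c * (H - y * sin φ)) =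
      cos (c * H) * (2 * π * J₀ (c * y)) := by
  have hexpand (φ : ℝ) : cos (c * (H - y * sin φ)) =
      cos (c * H) * cos (c * y * sin φ) + sin (c * H) * sin (c * y * sin φ) := by
    rw [mul_sub, ← mul_assoc, cos_sub]
  simp only [hexpand]
  rw [intervalIntegral.integral_add ((by fun_prop : Continuous _).intervalIntegrable _ _)
      ((by fun_prop : Continuous _).intervalIntegrable _ _),
    intervalIntegral.integral_const_mul, intervalIntegral.integral_const_mul,
    integral_cos_mul_sin, integral_sin_mul_sin, mul_zero, add_zero]

lemma integral_integral_cos_mul_sub_sin_mul_sin (c H : ℝ) :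
    ∫ θ in (0:ℝ)..2 * π, ∫ φ in (0:ℝ)..2 * π, cos (c * (H - sin θ * sin φ)) =
      cos (c * H) * ((2 * π) ^ 2 * J₀ (c / 2) ^ 2) := by
  simp only [integral_cos_mul_sub_mul_sin, intervalIntegral.integral_const_mul]
  have hneumann := integral_J₀_two_mul_sin (c / 2)
  rw [show 2 * (c / 2) = c by ring] at hneumann
  rw [hneumann]
  ring

lemma integral_integral_cos_mul_sin_mul_sin (c : ℝ) :
    ∫ θ in (0:ℝ)..2 * π, ∫ φ in (0:ℝ)..2 * π, cos (c * (sin θ * sin φ)) =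
      (2 * π) ^ 2 * J₀ (c / 2) ^ 2 := by
  simpa only [zero_sub, mul_neg, cos_neg, mul_zero, cos_zero, one_mul] using
    integral_integral_cos_mul_sub_sin_mul_sin c 0

theorem stmt_3_general (a : ℝ) (nR : ℕ) :
    E4 (fun θ₁ φ₁ θ₂ φ₂ =>
      ∑ s ∈ Finset.Icc 1 (nR - 1), ((nR : ℝ) - s) *
        Real.cos ((s : ℝ) * a *
          (Real.sin θ₁ * Real.sin φ₁ - Real.sin θ₂ * Real.sin φ₂)))
    = ∑ s ∈ Finset.Icc 1 (nR - 1), ((nR : ℝ) - s) * (J₀ ((s : ℝ) * a / 2)) ^ 4 := by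
  have hinner (θ₁ φ₁ : ℝ) :
      ∫ θ₂ in (0:ℝ)..2 * π, ∫ φ₂ in (0:ℝ)..2 * π,
          ∑ s ∈ Icc 1 (nR - 1), ((nR : ℝ) - s) *
            cos (s * a * (sin θ₁ * sin φ₁ - sin θ₂ * sin φ₂)) =
        ∑ s ∈ Icc 1 (nR - 1), ((nR : ℝ) - s) * ((2 * π) ^ 2 * J₀ (s * a / 2) ^ 2) *
          cos (s * a * (sin θ₁ * sin φ₁)) := by
    rw [intervalIntegral_intervalIntegral_finsetSum _ fun s => by fun_prop]
    refine sum_congr rfl fun s _ => ?_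
    simp only [intervalIntegral.integral_const_mul, integral_integral_cos_mul_sub_sin_mul_sin]
    ring
  rw [E4]
  simp only [hinner]
  rw [intervalIntegral_intervalIntegral_finsetSum _ fun s => by fun_prop, mul_sum]
  refine sum_congr rfl fun s _ => ?_
  simp only [intervalIntegral.integral_const_mul, integral_integral_cos_mul_sin_mul_sin]
  field_simp

theorem stmt_3 (a : ℝ) (nR : ℕ) (hR : 1 ≤ nR) :
    E4 (fun θ₁ φ₁ θ₂ φ₂ =>
      ∑ s ∈ Finset.Icc 1 (nR - 1), ((nR : ℝ) - s) *
        Real.cos ((s : ℝ) * a *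
          (Real.sin θ₁ * Real.sin φ₁ - Real.sin θ₂ * Real.sin φ₂)))
    = ∑ s ∈ Finset.Icc 1 (nR - 1), ((nR : ℝ) - s) * (J₀ ((s : ℝ) * a / 2)) ^ 4 :=
  stmt_3_general a nR
end
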